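/- arXiv:1910.03942 — 2 statements merged into one kernel-verified Lean document; each statement's English description precedes it below -/
import Mathlib

section
/- For any function u of class C^{2l+1} on [0,L] with l a positive integer, sum_{j=1}^{l} (-1)^{j+1} ∫_0^L D^{2j+1}u(x)·u(x) dx = sum_{i=0}^{l-1} [D^i u · (sum_{k=1}^{l-i} (-1)^{k+1} D^{2k+i}u)]_0^L − (1/2) sum_{j=1}^{l} [(D^j u)^2]_0^L. -/
open scoped BigOperators

noncomputable def D (L : ℝ) (u : ℝ → ℝ) (i : ℕ) (x : ℝ) : ℝ :=
  iteratedDerivWithin i u (Set.Icc 0 L) x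


variable {L : ℝ} {l : ℕ} {u : ℝ → ℝ}

lemma Dcont (hL : 0 < L) (hu : ContDiffOn ℝ ((2 * l + 1 : ℕ) : ℕ∞) u (Set.Icc 0 L))
    (m : ℕ) (hm : m ≤ 2 * l + 1) : ContinuousOn (D L u m) (Set.Icc 0 L) :=
  hu.continuousOn_iteratedDerivWithin (by exact_mod_cast hm) (uniqueDiffOn_Icc hL)

lemma Dderiv (hL : 0 < L) (hu : ContDiffOn ℝ ((2 * l + 1 : ℕ) : ℕ∞) u (Set.Icc 0 L))
    (m : ℕ) (hm : m < 2 * l + 1) {x : ℝ} (hx : x ∈ Set.Ioo 0 L) :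
    HasDerivAt (D L u m) (D L u (m + 1) x) x := by
  have hmem : x ∈ Set.Icc 0 L := Set.mem_Icc_of_Ioo hx
  have hdiff : DifferentiableWithinAt ℝ (D L u m) (Set.Icc 0 L) x :=
    (hu.differentiableOn_iteratedDerivWithin (by exact_mod_cast hm)
      (uniqueDiffOn_Icc hL)) x hmem
  have h1 : HasDerivWithinAt (D L u m) (D L u (m+1) x) (Set.Icc 0 L) x := by
    have h2 := hdiff.hasDerivWithinAt
    rwa [show derivWithin (D L u m) (Set.Icc 0 L) x = D L u (m+1) x from
      (congrFun iteratedDerivWithin_succ x).symm] at h2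
  exact h1.hasDerivAt (Icc_mem_nhds hx.1 hx.2)

lemma Dintegrable (hL : 0 < L) (hu : ContDiffOn ℝ ((2 * l + 1 : ℕ) : ℕ∞) u (Set.Icc 0 L))
    (m n : ℕ) (hm : m ≤ 2 * l + 1) (hn : n ≤ 2 * l + 1) :
    IntervalIntegrable (fun x => D L u m x * D L u n x) MeasureTheory.volume 0 L := by
  apply ContinuousOn.intervalIntegrable
  rw [Set.uIcc_of_le hL.le]
  exact (Dcont hL hu m hm).mul (Dcont hL hu n hn)

lemma ibp (hL : 0 < L) (hu : ContDiffOn ℝ ((2 * l + 1 : ℕ) : ℕ∞) u (Set.Icc 0 L))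
    (p q : ℕ) (hp : p < 2 * l + 1) (hq : q < 2 * l + 1) :
    ∫ x in (0:ℝ)..L, D L u (p+1) x * D L u q x
      = (D L u p L * D L u q L - D L u p 0 * D L u q 0)
        - ∫ x in (0:ℝ)..L, D L u p x * D L u (q+1) x := by
  have key : ∫ x in (0:ℝ)..L, (D L u (p+1) x * D L u q x + D L u p x * D L u (q+1) x)
      = D L u p L * D L u q L - D L u p 0 * D L u q 0 := by
    apply intervalIntegral.integral_eq_sub_of_hasDeriv_right_of_le (f := fun x => D L u p x * D L u q x) hL.le
    · exact (Dcont hL hu p hp.le).mul (Dcont hL hu q hq.le)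
    · intro x hx
      exact (((Dderiv hL hu p hp hx).mul (Dderiv hL hu q hq hx))).hasDerivWithinAt
    · exact (Dintegrable hL hu (p+1) q hp hq.le).add (Dintegrable hL hu p (q+1) hp.le hq)
  rw [intervalIntegral.integral_add (Dintegrable hL hu (p+1) q hp hq.le)
    (Dintegrable hL hu p (q+1) hp.le hq)] at key
  linarith

lemma ibp_half (hL : 0 < L) (hu : ContDiffOn ℝ ((2 * l + 1 : ℕ) : ℕ∞) u (Set.Icc 0 L))
    (j : ℕ) (hj : j < 2 * l + 1) :
    ∫ x in (0:ℝ)..L, D L u (j+1) x * D L u j x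
      = (1/2) * ((D L u j L) ^ 2 - (D L u j 0) ^ 2) := by
  have h := ibp hL hu j j hj hj
  rw [show (fun x => D L u j x * D L u (j+1) x) = fun x => D L u (j+1) x * D L u j x from
    funext fun x => mul_comm _ _] at h
  have e1 := pow_two (D L u j L)
  have e2 := pow_two (D L u j 0)
  linarith

lemma reduce (hL : 0 < L) (hu : ContDiffOn ℝ ((2 * l + 1 : ℕ) : ℕ∞) u (Set.Icc 0 L))
    (j : ℕ) (hj : j ≤ l) (i : ℕ) (hi : i ≤ j) :
    ∫ x in (0:ℝ)..L, D L u (2*j+1) x * D L u 0 x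
      = (∑ t ∈ Finset.range i, (-1:ℝ)^t *
          (D L u (2*j-t) L * D L u t L - D L u (2*j-t) 0 * D L u t 0))
        + (-1:ℝ)^i * ∫ x in (0:ℝ)..L, D L u (2*j+1-i) x * D L u i x := by
  induction i with
  | zero => simp
  | succ i ih =>
    have hi' : i ≤ j := Nat.le_of_succ_le hi
    rw [ih hi']
    have e1 : 2*j+1-i = (2*j-i)+1 := by omega
    have e2 : 2*j+1-(i+1) = 2*j-i := by omega
    rw [e1, e2, ibp hL hu (2*j-i) i (by omega) (by omega), Finset.sum_range_succ]
    ring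

theorem stmt_2 (L : ℝ) (hL : 0 < L) (l : ℕ) (hl : 1 ≤ l) (u : ℝ → ℝ)
    (hu : ContDiffOn ℝ ((2 * l + 1 : ℕ) : ℕ∞) u (Set.Icc 0 L)) :
    ∑ j ∈ Finset.Icc 1 l, (-1 : ℝ) ^ (j + 1) *
        ∫ x in (0:ℝ)..L, D L u (2 * j + 1) x * u x =
      (∑ i ∈ Finset.range l,
        (D L u i L * (∑ k ∈ Finset.Icc 1 (l - i), (-1 : ℝ) ^ (k + 1) * D L u (2 * k + i) L) -
         D L u i 0 * (∑ k ∈ Finset.Icc 1 (l - i), (-1 : ℝ) ^ (k + 1) * D L u (2 * k + i) 0)))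
      - (1 / 2) * ∑ j ∈ Finset.Icc 1 l, ((D L u j L) ^ 2 - (D L u j 0) ^ 2) := by
  have hD0 : D L u 0 = u := iteratedDerivWithin_zero
  have key : ∀ j ∈ Finset.Icc 1 l,
      (-1:ℝ)^(j+1) * ∫ x in (0:ℝ)..L, D L u (2*j+1) x * u x
        = (∑ t ∈ Finset.range j, (-1:ℝ)^(j+1) * ((-1:ℝ)^t *
            (D L u (2*j-t) L * D L u t L - D L u (2*j-t) 0 * D L u t 0)))
          + (-(1/2)) * ((D L u j L)^2 - (D L u j 0)^2) := by
    intro j hj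
    obtain ⟨hj1, hj2⟩ := Finset.mem_Icc.mp hj
    have hr := reduce hL hu j hj2 j le_rfl
    rw [show 2*j+1-j = j+1 by omega, ibp_half hL hu j (by omega), hD0] at hr
    have hsign : (-1:ℝ)^(j+1) * (-1:ℝ)^j = -1 := by
      rw [← pow_add, show j+1+j = 2*j+1 by omega]
      exact Odd.neg_one_pow ⟨j, by ring⟩
    rw [hr, mul_add, Finset.mul_sum]
    congr 1
    rw [← mul_assoc, hsign]; ring
  rw [Finset.sum_congr rfl key, Finset.sum_add_distrib, ← Finset.mul_sum]
  have hS1 : (∑ j ∈ Finset.Icc 1 l, ∑ t ∈ Finset.range j, (-1:ℝ)^(j+1) * ((-1:ℝ)^t *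
        (D L u (2*j-t) L * D L u t L - D L u (2*j-t) 0 * D L u t 0)))
      = ∑ i ∈ Finset.range l, ∑ k ∈ Finset.Icc 1 (l-i), (-1:ℝ)^(k+1) *
        (D L u (2*k+i) L * D L u i L - D L u (2*k+i) 0 * D L u i 0) := by
    rw [Finset.sum_sigma', Finset.sum_sigma']
    apply Finset.sum_nbij' (i := fun p => (⟨p.2, p.1 - p.2⟩ : Σ _ : ℕ, ℕ))
      (j := fun p => (⟨p.2 + p.1, p.1⟩ : Σ _ : ℕ, ℕ))
    · rintro ⟨j, t⟩ hp
      simp only [Finset.mem_sigma, Finset.mem_Icc, Finset.mem_range] at hp ⊢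
      omega
    · rintro ⟨i, k⟩ hp
      simp only [Finset.mem_sigma, Finset.mem_Icc, Finset.mem_range] at hp ⊢
      omega
    · rintro ⟨j, t⟩ hp
      simp only [Finset.mem_sigma, Finset.mem_Icc, Finset.mem_range] at hp
      simp only [Sigma.mk.inj_iff, heq_eq_eq]
      exact ⟨by omega, trivial⟩
    · rintro ⟨i, k⟩ hp
      simp only [Finset.mem_sigma, Finset.mem_Icc, Finset.mem_range] at hp
      simp only [Sigma.mk.inj_iff, heq_eq_eq]
      exact ⟨trivial, by omega⟩
    · rintro ⟨j, t⟩ hp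
      simp only [Finset.mem_sigma, Finset.mem_Icc, Finset.mem_range] at hp
      obtain ⟨⟨hj1, hj2⟩, ht⟩ := hp
      have e1 : 2*(j-t)+t = 2*j-t := by omega
      have e2 : (-1:ℝ)^(j+1) * (-1:ℝ)^t = (-1:ℝ)^((j-t)+1) := by
        rw [← pow_add, show j+1+t = ((j-t)+1) + 2*t by omega, pow_add, pow_mul]
        simp
      dsimp only
      rw [e1, ← e2]
      ring
  rw [hS1]
  have hRHS : ∀ i ∈ Finset.range l,
      (D L u i L * (∑ k ∈ Finset.Icc 1 (l - i), (-1 : ℝ) ^ (k + 1) * D L u (2 * k + i) L) -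
       D L u i 0 * (∑ k ∈ Finset.Icc 1 (l - i), (-1 : ℝ) ^ (k + 1) * D L u (2 * k + i) 0))
      = ∑ k ∈ Finset.Icc 1 (l-i), (-1:ℝ)^(k+1) *
        (D L u (2*k+i) L * D L u i L - D L u (2*k+i) 0 * D L u i 0) := by
    intro i _
    rw [Finset.mul_sum, Finset.mul_sum, ← Finset.sum_sub_distrib]
    exact Finset.sum_congr rfl fun k _ => by ring
  rw [Finset.sum_congr rfl hRHS]
  ring
end

section
/- Let λ > 0 and let u be a C^3 function on [0,L] satisfying λu + D^3u = 0 on (0,L) with u(0) = u(L) = Du(L) = 0. Then u is identically zero on [0,L]. -/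
open Set Filter Topology

theorem ContDiffOn.hasDerivWithinAt_iteratedDerivWithin {𝕜 F : Type*}
    [NontriviallyNormedField 𝕜] [NormedAddCommGroup F] [NormedSpace 𝕜 F]
    {f : 𝕜 → F} {s : Set 𝕜} {n : WithTop ℕ∞} {m : ℕ} {x : 𝕜}
    (h : ContDiffOn 𝕜 n f s) (hmn : m < n) (hs : UniqueDiffOn 𝕜 s) (hx : x ∈ s) :
    HasDerivWithinAt (iteratedDerivWithin m f s) (iteratedDerivWithin (m + 1) f s x) s x := by
  rw [iteratedDerivWithin_succ]
  exact (h.differentiableOn_iteratedDerivWithin hmn hs x hx).hasDerivWithinAt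

theorem HasDerivWithinAt.mul_sub_sq_div_two {u u₁ u₂ : ℝ → ℝ} {a₃ x : ℝ} {s : Set ℝ}
    (h₀ : HasDerivWithinAt u (u₁ x) s x) (h₁ : HasDerivWithinAt u₁ (u₂ x) s x)
    (h₂ : HasDerivWithinAt u₂ a₃ s x) :
    HasDerivWithinAt (fun y ↦ u y * u₂ y - u₁ y ^ 2 / 2) (u x * a₃) s x :=
  ((h₀.mul h₂).sub ((h₁.pow 2).div_const 2)).congr_deriv <| by
    simp only [Nat.cast_ofNat, Nat.add_one_sub_one, pow_one]
    ring

theorem hasDerivWithinAt_energy {L : ℝ} (hL : 0 < L) {u : ℝ → ℝ}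
    (hu : ContDiffOn ℝ 3 u (Icc 0 L)) {x : ℝ} (hx : x ∈ Icc 0 L) :
    HasDerivWithinAt (fun y ↦ u y * D L u 2 y - D L u 1 y ^ 2 / 2) (u x * D L u 3 x)
      (Icc 0 L) x := by
  have hderiv : ∀ m : ℕ, m < 3 →
      HasDerivWithinAt (D L u m) (D L u (m + 1) x) (Icc 0 L) x := fun m hm ↦
    hu.hasDerivWithinAt_iteratedDerivWithin (by exact_mod_cast hm) (uniqueDiffOn_Icc hL) hx
  have hu₀ : HasDerivWithinAt u (D L u 1 x) (Icc 0 L) x := by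
    simpa only [show D L u 0 = u from iteratedDerivWithin_zero] using hderiv 0 (by norm_num)
  exact hu₀.mul_sub_sq_div_two (hderiv 1 (by norm_num)) (hderiv 2 (by norm_num))

theorem AntitoneOn.eq_right_of_le {F : ℝ → ℝ} {a b : ℝ} (hF : AntitoneOn F (Icc a b))
    (h : F a ≤ F b) {x : ℝ} (hx : x ∈ Icc a b) : F x = F b := by
  have hxb : F b ≤ F x := hF hx ⟨hx.1.trans hx.2, le_rfl⟩ hx.2
  have hax : F x ≤ F a := hF ⟨le_rfl, hx.1.trans hx.2⟩ hx hx.1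
  linarith

theorem HasDerivAt.eq_zero_of_eqOn_const {F : ℝ → ℝ} {f' c x : ℝ} {s : Set ℝ}
    (hF : HasDerivAt F f' x) (hs : s ∈ 𝓝 x) (hc : EqOn F (fun _ ↦ c) s) : f' = 0 :=
  hF.unique ((hasDerivAt_const x c).congr_of_eventuallyEq (eventually_of_mem hs hc))

theorem stmt_9 (L : ℝ) (hL : 0 < L) (lam : ℝ) (hlam : 0 < lam)
    (u : ℝ → ℝ) (hu : ContDiffOn ℝ 3 u (Set.Icc 0 L))
    (heq : ∀ x ∈ Set.Ioo (0:ℝ) L, lam * u x + D L u 3 x = 0)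
    (h0 : u 0 = 0) (hLv : u L = 0) (h1L : D L u 1 L = 0) :
    ∀ x ∈ Set.Icc (0:ℝ) L, u x = 0 := by
  set E : ℝ → ℝ := fun y ↦ u y * D L u 2 y - D L u 1 y ^ 2 / 2
  have hE' : ∀ x ∈ Ioo 0 L, HasDerivAt E (-(lam * u x ^ 2)) x := fun x hx ↦
    ((hasDerivWithinAt_energy hL hu (Ioo_subset_Icc_self hx)).hasDerivAt
      (Icc_mem_nhds hx.1 hx.2)).congr_deriv (by linear_combination u x * heq x hx)
  have hanti : AntitoneOn E (Icc 0 L) := by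
    refine antitoneOn_of_deriv_nonpos (convex_Icc 0 L)
      (fun x hx ↦ (hasDerivWithinAt_energy hL hu hx).continuousWithinAt) ?_ ?_ <;>
      intro x hx <;> rw [interior_Icc] at hx
    · exact (hE' x hx).differentiableAt.differentiableWithinAt
    · rw [(hE' x hx).deriv]
      exact neg_nonpos.2 (by positivity)
  have hE0L : E 0 ≤ E L := by
    simp only [E, h0, hLv, h1L]
    nlinarith [sq_nonneg (D L u 1 0)]
  have hconst : EqOn E (fun _ ↦ E L) (Icc 0 L) := fun x hx ↦ hanti.eq_right_of_le hE0L hx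
  intro x hx
  rcases hx.1.eq_or_lt with rfl | hx₀
  · exact h0
  rcases hx.2.eq_or_lt with rfl | hxL
  · exact hLv
  have := (hE' x ⟨hx₀, hxL⟩).eq_zero_of_eqOn_const (Icc_mem_nhds hx₀ hxL) hconst
  simpa [hlam.ne'] using this
end
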